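/- Let H be a cocommutative bialgebra over a commutative ring R, F a Drinfel'd twist on H with R-matrix ℛ := F₂₁ · F⁻¹ and ℛ⁻¹ = τ(ℛ) = Σ_k R_k ⊗ R^k, and let L be a Lie algebra in H-modules equipped with an H-invariant R-bilinear form b : L × L → R (Σ b(ρ(h₍₁₎)(v), ρ(h₍₂₎)(w)) = ε(h) · b(v, w)) which is cyclic with respect to the bracket: b(v₀, ⁅v₁, v₂⁆) = b(v₂, ⁅v₀, v₁⁆). Assume the twist F is compatible with the pairing, i.e. the twisted pairing ⟨v, w⟩_⋆ := Σ_k b(f̄^k(v), f̄_k(w)) satisfies ⟨v, w⟩_⋆ = Σ_k ⟨R^k(v), R_k(w)⟩_⋆ for all v, w ∈ L. Then the twisted pairing is strictly cyclic with respect to the twisted bracket [x, y]_⋆ := Σ_k ⁅f̄^k(x), f̄_k(y)⁆: for all v₀, v₁, v₂ ∈ L, ⟨v₀, [v₁, v₂]_⋆⟩_⋆ = ⟨v₂, [v₀, v₁]_⋆⟩_⋆. -/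

import Mathlib

open scoped TensorProduct

noncomputable section

/-- `Δ ⊗ id` as an algebra homomorphism `H ⊗ H → (H ⊗ H) ⊗ H`. -/
def comulTensorId (R H : Type*) [CommRing R] [Ring H] [Bialgebra R H] :
    (H ⊗[R] H) →ₐ[R] (H ⊗[R] H) ⊗[R] H :=
  Algebra.TensorProduct.map (Bialgebra.comulAlgHom R H) (AlgHom.id R H)

/-- `id ⊗ Δ` as an algebra homomorphism `H ⊗ H → H ⊗ (H ⊗ H)`. -/
def idTensorComul (R H : Type*) [CommRing R] [Ring H] [Bialgebra R H] :
    (H ⊗[R] H) →ₐ[R] H ⊗[R] (H ⊗[R] H) :=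
  Algebra.TensorProduct.map (AlgHom.id R H) (Bialgebra.comulAlgHom R H)

/-- `F` is a Drinfel'd twist on the bialgebra `H` with two-sided inverse `Finv`:
it is invertible and satisfies the 2-cocycle condition
`(F ⊗ 1) · (Δ ⊗ id)(F) = (1 ⊗ F) · (id ⊗ Δ)(F)` in `H ⊗ H ⊗ H`. -/
def IsDrinfeldTwist (R : Type*) {H : Type*} [CommRing R] [Ring H] [Bialgebra R H]
    (F Finv : H ⊗[R] H) : Prop :=
  F * Finv = 1 ∧ Finv * F = 1 ∧
    (TensorProduct.assoc R H H H) ((F ⊗ₜ[R] (1 : H)) * comulTensorId R H F) =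
      ((1 : H) ⊗ₜ[R] F) * idTensorComul R H F

/-- The `R`-matrix `ℛ := F₂₁ · F⁻¹` associated to a Drinfel'd twist, where
`F₂₁ = τ(F)` and `τ` is the flip of `H ⊗ H`. -/
def Rmat (R : Type*) {H : Type*} [CommRing R] [Ring H] [Bialgebra R H]
    (F Finv : H ⊗[R] H) : H ⊗[R] H :=
  (Algebra.TensorProduct.comm R H H) F * Finv

/-- The bialgebra `H` is cocommutative: `τ ∘ Δ = Δ`. -/
def IsCocommutative (R : Type*) (H : Type*) [CommRing R] [Ring H] [Bialgebra R H] : Prop :=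
  ∀ x : H, (Algebra.TensorProduct.comm R H H) (Coalgebra.comul (R := R) x) =
    Coalgebra.comul (R := R) x

/-- The action of an element of `H ⊗ H` on `M ⊗ N`, acting with the first leg on `M`
and the second leg on `N` through the given representations. -/
def legAct {R H : Type*} [CommRing R] [Ring H] [Algebra R H]
    {M N : Type*} [AddCommGroup M] [Module R M] [AddCommGroup N] [Module R N]
    (ρM : H →ₐ[R] Module.End R M) (ρN : H →ₐ[R] Module.End R N) :
    H ⊗[R] H →ₗ[R] (M ⊗[R] N →ₗ[R] M ⊗[R] N) :=
  (TensorProduct.homTensorHomMap (RingHom.id R) M N M N).comp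
    (TensorProduct.map ρM.toLinearMap ρN.toLinearMap)

/-- The Lie bracket of `L` as an `R`-bilinear map. -/
def lieBil (R L : Type*) [CommRing R] [LieRing L] [LieAlgebra R L] :
    L →ₗ[R] L →ₗ[R] L :=
  LinearMap.mk₂ R (fun x y => ⁅x, y⁆) add_lie smul_lie lie_add lie_smul

/-- `ρ` makes the `R`-Lie algebra `L` into a Lie algebra in `H`-modules:
`ρ(h)⁅x, y⁆ = Σ ⁅ρ(h₍₁₎)(x), ρ(h₍₂₎)(y)⁆`. -/
def IsHLieAlgebra (R : Type*) {H L : Type*} [CommRing R] [Ring H] [Bialgebra R H]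
    [LieRing L] [LieAlgebra R L] (ρ : H →ₐ[R] Module.End R L) : Prop :=
  ∀ (h : H) (x y : L),
    ρ h ⁅x, y⁆ =
      TensorProduct.lift (lieBil R L)
        (legAct ρ ρ (Coalgebra.comul (R := R) h) (x ⊗ₜ[R] y))

/-- The twisted bracket `[x, y]_⋆ := Σ ⁅f̄ᵏ(x), f̄ₖ(y)⁆`, as a linear map on `L ⊗ L`. -/
def starBracket {R H L : Type*} [CommRing R] [Ring H] [Bialgebra R H]
    [LieRing L] [LieAlgebra R L] (ρ : H →ₐ[R] Module.End R L) (Finv : H ⊗[R] H) :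
    L ⊗[R] L →ₗ[R] L :=
  (TensorProduct.lift (lieBil R L)).comp (legAct ρ ρ Finv)

/-- The twisted pairing `⟨v, w⟩_⋆ := Σ b(f̄ᵏ(v), f̄ₖ(w))`, as a linear map on `V ⊗ V`. -/
def starPair {R H V : Type*} [CommRing R] [Ring H] [Bialgebra R H]
    [AddCommGroup V] [Module R V] (ρ : H →ₐ[R] Module.End R V)
    (b : V →ₗ[R] V →ₗ[R] R) (Finv : H ⊗[R] H) : V ⊗[R] V →ₗ[R] R :=
  (TensorProduct.lift b).comp (legAct ρ ρ Finv)

/-!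
Write `F⁻¹ = Σ f̄ᵏ ⊗ f̄ₖ`. Because `L` is a Lie algebra in `H`-modules, `⟨v₀, [v₁, v₂]_⋆⟩_⋆` is
`b(x, ⁅y, z⁆)` evaluated on `((id ⊗ Δ)(F⁻¹) · (1 ⊗ F⁻¹)) (v₀ ⊗ v₁ ⊗ v₂)`, and the inverted 2-cocycle
condition replaces this element by `(Δ ⊗ id)(F⁻¹) · (F⁻¹ ⊗ 1)`. Cyclicity of `b` turns
`b(x, ⁅y, z⁆)` into `b(z, ⁅x, y⁆)`, after which the `H`-Lie property collapses `(Δ ⊗ id)(F⁻¹)` into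
a single action of `τ(F⁻¹)` on `v₂ ⊗ [v₀, v₁]_⋆`. Finally, pairing through `τ(F⁻¹)` is the same as
pairing through `F⁻¹`: the pairing is invariant under `ℛ` and `ℛ · F · τ(F⁻¹) = 1`.
-/

open TensorProduct LinearMap

section TensorAct

variable {R A B C M N P : Type*} [CommSemiring R] [Semiring A] [Algebra R A] [Semiring B]
  [Algebra R B] [Semiring C] [Algebra R C] [AddCommMonoid M] [Module R M] [AddCommMonoid N]
  [Module R N] [AddCommMonoid P] [Module R P]
  (πM : A →ₐ[R] Module.End R M) (πN : B →ₐ[R] Module.End R N) (πP : C →ₐ[R] Module.End R P)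

/-- Unlike `legAct`, the two legs may act through different algebras, as for the action of
`H ⊗ (H ⊗ H)` on `L ⊗ (L ⊗ L)`. -/
def tensorAct : A ⊗[R] B →ₐ[R] Module.End R (M ⊗[R] N) :=
  Algebra.TensorProduct.lift ((Module.End.rTensorAlgHom R M N).comp πM)
    ((Module.End.lTensorAlgHom R N M).comp πN) fun _ _ =>
      (rTensor_comp_lTensor _ _ _).trans (lTensor_comp_rTensor _ _ _).symm

@[simp]
theorem tensorAct_tmul (a : A) (b : B) : tensorAct πM πN (a ⊗ₜ[R] b) = map (πM a) (πN b) :=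
  rTensor_comp_lTensor _ _ _

theorem tensorAct_comm_comp (X : A ⊗[R] B) :
    tensorAct πN πM (Algebra.TensorProduct.comm R A B X) ∘ₗ (TensorProduct.comm R M N).toLinearMap =
      (TensorProduct.comm R M N).toLinearMap ∘ₗ tensorAct πM πN X := by
  induction X using TensorProduct.induction_on with
  | zero => simp
  | tmul a b => simpa using map_comp_comm_eq _ _
  | add X Y hX hY => simp only [map_add, add_comp, comp_add, hX, hY]

theorem tensorAct_assoc_comp_assoc (Z : (A ⊗[R] B) ⊗[R] C) :
    tensorAct πM (tensorAct πN πP) (Algebra.TensorProduct.assoc R R R A B C Z) ∘ₗ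
        (TensorProduct.assoc R M N P).toLinearMap =
      (TensorProduct.assoc R M N P).toLinearMap ∘ₗ tensorAct (tensorAct πM πN) πP Z := by
  induction Z using TensorProduct.induction_on with
  | zero => simp
  | tmul X c =>
    induction X using TensorProduct.induction_on with
    | zero => simp
    | tmul a b => simpa using map_map_comp_assoc_eq _ _ _
    | add X Y hX hY => simp only [add_tmul, map_add, add_comp, comp_add, hX, hY]
  | add X Y hX hY => simp only [map_add, add_comp, comp_add, hX, hY]

end TensorAct

section LegAct

variable {R H M N : Type*} [CommRing R] [Ring H] [Algebra R H]
  [AddCommGroup M] [Module R M] [AddCommGroup N] [Module R N]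
  (ρM : H →ₐ[R] Module.End R M) (ρN : H →ₐ[R] Module.End R N)

theorem tensorAct_eq_legAct (X : H ⊗[R] H) : tensorAct ρM ρN X = legAct ρM ρN X := by
  induction X using TensorProduct.induction_on with
  | zero => simp
  | tmul a c => exact tensorAct_tmul ρM ρN a c
  | add X Y hX hY => simp [hX, hY]

theorem legAct_mul (X Y : H ⊗[R] H) :
    legAct ρM ρN (X * Y) = legAct ρM ρN X ∘ₗ legAct ρM ρN Y := by
  simp only [← tensorAct_eq_legAct, map_mul, Module.End.mul_eq_comp]

theorem legAct_one : legAct ρM ρN 1 = LinearMap.id := by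
  simp only [← tensorAct_eq_legAct, map_one, Module.End.one_eq_id]

end LegAct

section Bialgebra

variable {R H : Type*} [CommRing R] [Ring H] [Bialgebra R H]

theorem IsDrinfeldTwist.inv_cocycle {F Finv : H ⊗[R] H}
    (hF : IsDrinfeldTwist R F Finv) :
    Algebra.TensorProduct.assoc R R R H H H (comulTensorId R H Finv * (Finv ⊗ₜ[R] 1)) =
      idTensorComul R H Finv * (1 ⊗ₜ[R] Finv) := by
  obtain ⟨hFFinv, hFinvF, hcocycle⟩ := hF
  change Algebra.TensorProduct.assoc R R R H H H _ = _ at hcocycle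
  refine left_inv_eq_right_inv (a := (1 ⊗ₜ[R] F) * idTensorComul R H F) ?_ ?_
  · rw [← hcocycle, ← map_mul, mul_assoc, ← mul_assoc (Finv ⊗ₜ[R] 1),
      Algebra.TensorProduct.tmul_mul_tmul, hFinvF, one_mul, ← Algebra.TensorProduct.one_def,
      one_mul, ← map_mul, hFinvF, map_one, map_one]
  · rw [mul_assoc, ← mul_assoc (idTensorComul R H F), ← map_mul, hFFinv, map_one, one_mul,
      Algebra.TensorProduct.tmul_mul_tmul, hFFinv, one_mul, ← Algebra.TensorProduct.one_def]

theorem lift_comp_legAct_comm_eq_starPair {V : Type*} [AddCommGroup V] [Module R V]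
    {ρ : H →ₐ[R] Module.End R V} {b : V →ₗ[R] V →ₗ[R] R} {F Finv : H ⊗[R] H}
    (hFFinv : F * Finv = 1) (hFinvF : Finv * F = 1)
    (hcompat : ∀ v w : V, starPair ρ b Finv (v ⊗ₜ[R] w) =
      starPair ρ b Finv (legAct ρ ρ (Rmat R F Finv) (v ⊗ₜ[R] w))) :
    lift b ∘ₗ legAct ρ ρ (Algebra.TensorProduct.comm R H H Finv) = starPair ρ b Finv := by
  set τFinv := Algebra.TensorProduct.comm R H H Finv
  have hRmat : starPair ρ b Finv ∘ₗ legAct ρ ρ (Rmat R F Finv) = starPair ρ b Finv :=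
    (ext' hcompat).symm
  have hRmat_mul : Rmat R F Finv * (F * τFinv) = 1 := by
    rw [Rmat, mul_assoc, ← mul_assoc Finv, hFinvF, one_mul, ← map_mul, hFFinv, map_one]
  calc lift b ∘ₗ legAct ρ ρ τFinv = lift b ∘ₗ legAct ρ ρ (Finv * (F * τFinv)) := by
        rw [← mul_assoc, hFinvF, one_mul]
    _ = starPair ρ b Finv ∘ₗ legAct ρ ρ (Rmat R F Finv) ∘ₗ legAct ρ ρ (F * τFinv) := by
        rw [← comp_assoc, hRmat, legAct_mul, starPair, comp_assoc]
    _ = starPair ρ b Finv := by rw [← legAct_mul, hRmat_mul, legAct_one, comp_id]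

variable {M N P Q : Type*} [AddCommGroup M] [Module R M] [AddCommGroup N] [Module R N]
  [AddCommGroup P] [Module R P] [AddCommGroup Q] [Module R Q]
  {ρM : H →ₐ[R] Module.End R M} {ρN : H →ₐ[R] Module.End R N} {ρP : H →ₐ[R] Module.End R P}
  {ρQ : H →ₐ[R] Module.End R Q} {φ : N ⊗[R] P →ₗ[R] Q}

theorem lTensor_comp_tensorAct_idTensorComul
    (hφ : ∀ h : H, ρQ h ∘ₗ φ = φ ∘ₗ tensorAct ρN ρP (Coalgebra.comul (R := R) h))
    (X : H ⊗[R] H) :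
    lTensor M φ ∘ₗ tensorAct ρM (tensorAct ρN ρP) (idTensorComul R H X) =
      tensorAct ρM ρQ X ∘ₗ lTensor M φ := by
  induction X using TensorProduct.induction_on with
  | zero => simp
  | tmul a c =>
    simp only [idTensorComul, Algebra.TensorProduct.map_tmul, AlgHom.id_apply,
      Bialgebra.comulAlgHom_apply, tensorAct_tmul, lTensor_comp_map, map_comp_lTensor, hφ]
  | add X Y hX hY => simp only [map_add, add_comp, comp_add, hX, hY]

theorem rTensor_comp_tensorAct_comulTensorId
    (hφ : ∀ h : H, ρQ h ∘ₗ φ = φ ∘ₗ tensorAct ρN ρP (Coalgebra.comul (R := R) h))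
    (X : H ⊗[R] H) :
    rTensor M φ ∘ₗ tensorAct (tensorAct ρN ρP) ρM (comulTensorId R H X) =
      tensorAct ρQ ρM X ∘ₗ rTensor M φ := by
  induction X using TensorProduct.induction_on with
  | zero => simp
  | tmul a c =>
    simp only [comulTensorId, Algebra.TensorProduct.map_tmul, AlgHom.id_apply,
      Bialgebra.comulAlgHom_apply, tensorAct_tmul, rTensor_comp_map, map_comp_rTensor, hφ]
  | add X Y hX hY => simp only [map_add, add_comp, comp_add, hX, hY]

end Bialgebra

section Lie

variable {R L : Type*} [CommRing R] [LieRing L] [LieAlgebra R L]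

@[simp]
theorem lieBil_apply (x y : L) : lieBil R L x y = ⁅x, y⁆ := rfl

theorem lift_comp_lTensor_lift_lieBil_comp_assoc {b : L →ₗ[R] L →ₗ[R] R}
    (hbcyc : ∀ v₀ v₁ v₂ : L, b v₀ ⁅v₁, v₂⁆ = b v₂ ⁅v₀, v₁⁆) :
    lift b ∘ₗ lTensor L (lift (lieBil R L)) ∘ₗ (TensorProduct.assoc R L L L).toLinearMap =
      lift b ∘ₗ (TensorProduct.comm R L L).toLinearMap ∘ₗ rTensor L (lift (lieBil R L)) :=
  ext_threefold fun x y z => by simpa using hbcyc x y z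

theorem IsHLieAlgebra.comp_lift_lieBil {H : Type*} [Ring H] [Bialgebra R H]
    {ρ : H →ₐ[R] Module.End R L} (hL : IsHLieAlgebra R ρ) (h : H) :
    ρ h ∘ₗ lift (lieBil R L) = lift (lieBil R L) ∘ₗ tensorAct ρ ρ (Coalgebra.comul (R := R) h) :=
  ext' fun x y => by simpa [tensorAct_eq_legAct] using hL h x y

end Lie

section StarStructures

variable {R H L : Type*} [CommRing R] [Ring H] [Bialgebra R H] [LieRing L] [LieAlgebra R L]
  {ρ : H →ₐ[R] Module.End R L} (b : L →ₗ[R] L →ₗ[R] R) (Finv : H ⊗[R] H)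

theorem starPair_tmul_starBracket_eq_lTensor (hL : IsHLieAlgebra R ρ) (v₀ v₁ v₂ : L) :
    starPair ρ b Finv (v₀ ⊗ₜ[R] starBracket ρ Finv (v₁ ⊗ₜ[R] v₂)) =
      lift b (lTensor L (lift (lieBil R L)) (tensorAct ρ (tensorAct ρ ρ)
        (idTensorComul R H Finv * (1 ⊗ₜ[R] Finv)) (v₀ ⊗ₜ[R] (v₁ ⊗ₜ[R] v₂)))) := by
  have hbracket := DFunLike.congr_fun
    (lTensor_comp_tensorAct_idTensorComul (ρM := ρ) hL.comp_lift_lieBil Finv)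
    (tensorAct ρ (tensorAct ρ ρ) (1 ⊗ₜ[R] Finv) (v₀ ⊗ₜ[R] (v₁ ⊗ₜ[R] v₂)))
  simp only [comp_apply] at hbracket
  rw [map_mul, Module.End.mul_apply, hbracket]
  simp [starPair, starBracket, tensorAct_eq_legAct]

theorem starPair_tmul_starBracket_eq_rTensor (hL : IsHLieAlgebra R ρ) {F : H ⊗[R] H}
    (hFFinv : F * Finv = 1) (hFinvF : Finv * F = 1)
    (hcompat : ∀ v w : L, starPair ρ b Finv (v ⊗ₜ[R] w) =
      starPair ρ b Finv (legAct ρ ρ (Rmat R F Finv) (v ⊗ₜ[R] w))) (v₀ v₁ v₂ : L) :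
    starPair ρ b Finv (v₂ ⊗ₜ[R] starBracket ρ Finv (v₀ ⊗ₜ[R] v₁)) =
      lift b (TensorProduct.comm R L L (rTensor L (lift (lieBil R L)) (tensorAct (tensorAct ρ ρ) ρ
        (comulTensorId R H Finv * (Finv ⊗ₜ[R] 1)) ((v₀ ⊗ₜ[R] v₁) ⊗ₜ[R] v₂)))) := by
  have hbracket := DFunLike.congr_fun
    (rTensor_comp_tensorAct_comulTensorId (ρM := ρ) hL.comp_lift_lieBil Finv)
    (tensorAct (tensorAct ρ ρ) ρ (Finv ⊗ₜ[R] 1) ((v₀ ⊗ₜ[R] v₁) ⊗ₜ[R] v₂))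
  have hflip := DFunLike.congr_fun (tensorAct_comm_comp ρ ρ Finv)
  have hRmat := DFunLike.congr_fun (lift_comp_legAct_comm_eq_starPair hFFinv hFinvF hcompat)
  simp only [comp_apply, LinearEquiv.coe_coe] at hbracket hflip hRmat
  rw [map_mul, Module.End.mul_apply, hbracket, ← hflip, tensorAct_eq_legAct, hRmat]
  simp [starBracket, tensorAct_eq_legAct]

end StarStructures

theorem starPair_strictly_cyclic_general
    (R : Type*) [CommRing R] (H : Type*) [Ring H] [Bialgebra R H]
    (L : Type*) [LieRing L] [LieAlgebra R L]
    (ρ : H →ₐ[R] Module.End R L) (hL : IsHLieAlgebra R ρ)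
    (b : L →ₗ[R] L →ₗ[R] R)
    (hbcyc : ∀ v₀ v₁ v₂ : L, b v₀ ⁅v₁, v₂⁆ = b v₂ ⁅v₀, v₁⁆)
    (F Finv : H ⊗[R] H) (hF : IsDrinfeldTwist R F Finv)
    (hcompat : ∀ v w : L,
      starPair ρ b Finv (v ⊗ₜ[R] w) =
        starPair ρ b Finv (legAct ρ ρ (Rmat R F Finv) (v ⊗ₜ[R] w))) :
    ∀ v₀ v₁ v₂ : L,
      starPair ρ b Finv (v₀ ⊗ₜ[R] (starBracket ρ Finv (v₁ ⊗ₜ[R] v₂))) =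
        starPair ρ b Finv (v₂ ⊗ₜ[R] (starBracket ρ Finv (v₀ ⊗ₜ[R] v₁))) := by
  intro v₀ v₁ v₂
  set Z := comulTensorId R H Finv * (Finv ⊗ₜ[R] 1)
  have hassoc := DFunLike.congr_fun (tensorAct_assoc_comp_assoc ρ ρ ρ Z) ((v₀ ⊗ₜ[R] v₁) ⊗ₜ[R] v₂)
  have hcyclic := DFunLike.congr_fun (lift_comp_lTensor_lift_lieBil_comp_assoc hbcyc)
    (tensorAct (tensorAct ρ ρ) ρ Z ((v₀ ⊗ₜ[R] v₁) ⊗ₜ[R] v₂))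
  simp only [comp_apply, LinearEquiv.coe_coe, TensorProduct.assoc_tmul] at hassoc hcyclic
  rw [starPair_tmul_starBracket_eq_lTensor b Finv hL,
    starPair_tmul_starBracket_eq_rTensor b Finv hL hF.1 hF.2.1 hcompat,
    ← hF.inv_cocycle, hassoc, hcyclic]

/-- For a Drinfel'd twist on a cocommutative bialgebra `H`, compatible
with an `H`-invariant bilinear form `b` on a Lie algebra `L` in `H`-modules that is
cyclic with respect to the bracket, the twisted pairing is strictly cyclic with respect
to the twisted bracket: `⟨v₀, [v₁, v₂]_⋆⟩_⋆ = ⟨v₂, [v₀, v₁]_⋆⟩_⋆`. -/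
theorem starPair_strictly_cyclic
    (R : Type*) [CommRing R] (H : Type*) [Ring H] [Bialgebra R H]
    (hcc : IsCocommutative R H)
    (L : Type*) [LieRing L] [LieAlgebra R L]
    (ρ : H →ₐ[R] Module.End R L) (hL : IsHLieAlgebra R ρ)
    (b : L →ₗ[R] L →ₗ[R] R)
    (hbinv : ∀ (h : H) (v w : L),
      TensorProduct.lift b (legAct ρ ρ (Coalgebra.comul (R := R) h) (v ⊗ₜ[R] w)) =
        Coalgebra.counit (R := R) h * b v w)
    (hbcyc : ∀ v₀ v₁ v₂ : L, b v₀ ⁅v₁, v₂⁆ = b v₂ ⁅v₀, v₁⁆)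
    (F Finv : H ⊗[R] H) (hF : IsDrinfeldTwist R F Finv)
    (hcompat : ∀ v w : L,
      starPair ρ b Finv (v ⊗ₜ[R] w) =
        starPair ρ b Finv (legAct ρ ρ (Rmat R F Finv) (v ⊗ₜ[R] w))) :
    ∀ v₀ v₁ v₂ : L,
      starPair ρ b Finv (v₀ ⊗ₜ[R] (starBracket ρ Finv (v₁ ⊗ₜ[R] v₂))) =
        starPair ρ b Finv (v₂ ⊗ₜ[R] (starBracket ρ Finv (v₀ ⊗ₜ[R] v₁))) :=
  starPair_strictly_cyclic_general R H L ρ hL b hbcyc F Finv hF hcompat
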